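/- arXiv:1105.4266 — 2 statements merged into one kernel-verified Lean document; each statement's English description precedes it below -/
import Mathlib

section
/- The symbol A(ξ)(a,b) = (ξ·(a+b), ξ×b) of the magnetostatic operator satisfies Murat's constant-rank condition: rank A(ξ) = 3 for every ξ in the unit sphere of ℝ³. -/
open Matrix

/-- The symbol `A(ξ)(a,b) = (ξ·(a+b), ξ×b)` of the magnetostatic operator
`𝒜^mag(m,h) = (div(m+h), curl h)`, as a linear map `ℝ³ × ℝ³ → ℝ × ℝ³`. -/
noncomputable def magSymbol (ξ : Fin 3 → ℝ) :
    ((Fin 3 → ℝ) × (Fin 3 → ℝ)) →ₗ[ℝ] ℝ × (Fin 3 → ℝ) where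
  toFun p := (ξ ⬝ᵥ (p.1 + p.2), crossProduct ξ p.2)
  map_add' x y := by
    ext <;> simp [dotProduct_add] <;> ring
  map_smul' c x := by
    ext <;> simp [dotProduct_smul] <;> ring

/-!
The map `b ↦ ξ ⨯₃ b` is onto the plane `ξ ⬝ᵥ c = 0`, since `ξ ⨯₃ (c ⨯₃ ξ) = (ξ ⬝ᵥ ξ) • c` for such
`c`, and the first component `ξ ⬝ᵥ (a + b)` can be set freely through `a ∈ ℝ ξ`. Hence the range of
`A(ξ)` is the kernel of the nonzero functional `(s, c) ↦ ξ ⬝ᵥ c` on `ℝ × ℝ³`, of dimension `4 - 1`.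
-/

theorem exists_crossProduct_eq_iff {K : Type*} [Field K] {ξ : Fin 3 → K} (hξ : ξ ⬝ᵥ ξ ≠ 0)
    (c : Fin 3 → K) : (∃ b, ξ ⨯₃ b = c) ↔ ξ ⬝ᵥ c = 0 := by
  refine ⟨fun ⟨b, hb⟩ => hb ▸ dot_self_cross ξ b, fun hc => ⟨(ξ ⬝ᵥ ξ)⁻¹ • c ⨯₃ ξ, ?_⟩⟩
  rw [map_smul, cross_cross_eq_smul_sub_smul', dotProduct_comm c, hc, zero_smul, sub_zero,
    smul_smul, inv_mul_cancel₀ hξ, one_smul]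

theorem range_magSymbol {ξ : Fin 3 → ℝ} (hξ : ξ ⬝ᵥ ξ ≠ 0) :
    LinearMap.range (magSymbol ξ) =
      LinearMap.ker (dotProductBilin ℝ ℝ ξ ∘ₗ LinearMap.snd ℝ ℝ (Fin 3 → ℝ)) := by
  ext ⟨s, c⟩
  simp only [LinearMap.mem_range, LinearMap.mem_ker, LinearMap.comp_apply, LinearMap.snd_apply,
    dotProductBilin_apply_apply, ← exists_crossProduct_eq_iff hξ, Prod.exists, magSymbol,
    LinearMap.coe_mk, AddHom.coe_mk, Prod.mk.injEq]
  constructor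
  · rintro ⟨a, b, -, hb⟩
    exact ⟨b, hb⟩
  · rintro ⟨b, hb⟩
    refine ⟨((s - ξ ⬝ᵥ b) / (ξ ⬝ᵥ ξ)) • ξ, b, ?_, hb⟩
    rw [dotProduct_add, dotProduct_smul, smul_eq_mul, div_mul_cancel₀ _ hξ, sub_add_cancel]

/-- the magnetostatic symbol satisfies Murat's constant-rank condition:
`rank A(ξ) = 3` for every `ξ` in the unit sphere of `ℝ³`. -/
theorem magSymbol_constant_rank (ξ : Fin 3 → ℝ) (hξ : ξ ⬝ᵥ ξ = 1) :
    Module.finrank ℝ (LinearMap.range (magSymbol ξ)) = 3 := by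
  have hξ₀ : ξ ⬝ᵥ ξ ≠ 0 := hξ ▸ one_ne_zero
  rw [range_magSymbol hξ₀]
  set ψ := dotProductBilin ℝ ℝ ξ ∘ₗ LinearMap.snd ℝ ℝ (Fin 3 → ℝ)
  have hψ : ψ ≠ 0 := fun h => hξ₀ (by simpa [ψ] using LinearMap.congr_fun h (0, ξ))
  have hker := Module.Dual.finrank_ker_add_one_of_ne_zero hψ
  rw [Module.finrank_prod, Module.finrank_self, Module.finrank_fin_fun] at hker
  omega
end

section
/- Fix ξ ∈ ℝ³ \ {0} with ξ₃ ≠ 0, and for ε > 0 set ξ_ε := (ξ₁, ξ₂, ξ₃/ε). Let P_ε ∈ Lin(ℝ⁶; ℝ⁶) be the orthogonal projection onto ker A(ξ_ε), where A(η)(a,b) = (η·(a+b), η×b) for (a,b) ∈ ℝ³×ℝ³. Then as ε → 0⁺, P_ε(a,b) converges for every (a,b) ∈ ℝ⁶ to P₀(a,b), the orthogonal projection of (a,b) onto the subspace {(a,b) ∈ ℝ³×ℝ³ : a₃ + b₃ = 0, b₁ = 0, b₂ = 0}. -/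
/-!
Since `A(c η) = c A(η)`, the kernel of `A(ξ_ε)` is that of `A(η_ε)` with `η_ε = (εξ₁, εξ₂, ξ₃)`,
which depends continuously on `ε ∈ [0, ∞)`, never vanishes, and at `ε = 0` gives the limit
subspace. For `η ≠ 0` the projection onto `ker A(η)` is an explicit rational function of `η`,
hence continuous in `η`.
-/

open Filter

/-- The magnetostatic symbol `A(η)(a,b) = (η·(a+b), η×b)` on `ℝ⁶ ≅ ℝ³ × ℝ³`
(coordinates `0,1,2` for `a`, `3,4,5` for `b`), with values in `ℝ⁴ ≅ ℝ × ℝ³`. -/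
noncomputable def magSymbol6 (η : Fin 3 → ℝ) :
    EuclideanSpace ℝ (Fin 6) →ₗ[ℝ] (Fin 4 → ℝ) :=
  (Matrix.mulVecLin
    !![η 0, η 1, η 2, η 0, η 1, η 2;
       0, 0, 0, 0, -η 2, η 1;
       0, 0, 0, η 2, 0, -η 0;
       0, 0, 0, -η 1, η 0, 0]).comp
    (WithLp.linearEquiv 2 ℝ (Fin 6 → ℝ)).toLinearMap

/-- The limiting subspace `{(a,b) : a₃ + b₃ = 0, b₁ = 0, b₂ = 0}` of `ℝ⁶ ≅ ℝ³ × ℝ³`. -/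
noncomputable def magLimitSpace : Submodule ℝ (EuclideanSpace ℝ (Fin 6)) :=
  LinearMap.ker
    ((Matrix.mulVecLin
      !![(0:ℝ), 0, 1, 0, 0, 1;
         0, 0, 0, 1, 0, 0;
         0, 0, 0, 0, 1, 0] : (Fin 6 → ℝ) →ₗ[ℝ] (Fin 3 → ℝ)).comp
      (WithLp.linearEquiv 2 ℝ (Fin 6 → ℝ)).toLinearMap)

instance (K : Submodule ℝ (EuclideanSpace ℝ (Fin 6))) : CompleteSpace K :=
  FiniteDimensional.complete ℝ K

lemma mem_ker_magSymbol6_iff (η : Fin 3 → ℝ) (x : EuclideanSpace ℝ (Fin 6)) :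
    x ∈ LinearMap.ker (magSymbol6 η) ↔
      η 0 * x 0 + η 1 * x 1 + η 2 * x 2 + η 0 * x 3 + η 1 * x 4 + η 2 * x 5 = 0 ∧
        η 1 * x 5 - η 2 * x 4 = 0 ∧ η 2 * x 3 - η 0 * x 5 = 0 ∧ η 0 * x 4 - η 1 * x 3 = 0 := by
  simp [magSymbol6, funext_iff, Fin.forall_fin_succ, dotProduct, Fin.sum_univ_six,
    neg_add_eq_sub, ← sub_eq_add_neg]

lemma magSymbol6_smul (c : ℝ) (η : Fin 3 → ℝ) : magSymbol6 (c • η) = c • magSymbol6 η := by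
  ext x i
  fin_cases i <;> simp [magSymbol6, dotProduct, Fin.sum_univ_six] <;> ring

lemma ker_magSymbol6_smul {c : ℝ} (hc : c ≠ 0) (η : Fin 3 → ℝ) :
    LinearMap.ker (magSymbol6 (c • η)) = LinearMap.ker (magSymbol6 η) := by
  rw [magSymbol6_smul, LinearMap.ker_smul _ _ hc]

lemma ker_magSymbol6_vertical {c : ℝ} (hc : c ≠ 0) :
    LinearMap.ker (magSymbol6 ![0, 0, c]) = magLimitSpace := by
  ext x
  rw [mem_ker_magSymbol6_iff]
  simp [magLimitSpace, funext_iff, Fin.forall_fin_succ, dotProduct,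
    Fin.sum_univ_six, hc, and_comm, ← mul_add]

/-- For `η ≠ 0`, `ker A(η) = {(a', μ η) : η·a' + μ |η|² = 0}`, and the projection of `v = (a, b)`
onto it is `(a - s η, -t η)`. -/
noncomputable def magKerProj (η : Fin 3 → ℝ) (v : EuclideanSpace ℝ (Fin 6)) :
    EuclideanSpace ℝ (Fin 6) :=
  let N := 2 * (η 0 ^ 2 + η 1 ^ 2 + η 2 ^ 2)
  let s := (η 0 * (v 0 + v 3) + η 1 * (v 1 + v 4) + η 2 * (v 2 + v 5)) / N
  let t := (η 0 * (v 0 - v 3) + η 1 * (v 1 - v 4) + η 2 * (v 2 - v 5)) / N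
  !₂[v 0 - s * η 0, v 1 - s * η 1, v 2 - s * η 2, -(t * η 0), -(t * η 1), -(t * η 2)]

lemma sq_add_sq_add_sq_ne_zero {η : Fin 3 → ℝ} (hη : η ≠ 0) :
    η 0 ^ 2 + η 1 ^ 2 + η 2 ^ 2 ≠ 0 := by
  simpa [dotProduct, Fin.sum_univ_three, ← sq] using dotProduct_self_eq_zero.not.mpr hη

lemma starProjection_ker_magSymbol6 {η : Fin 3 → ℝ} (hη : η ≠ 0)
    (v : EuclideanSpace ℝ (Fin 6)) :
    (LinearMap.ker (magSymbol6 η)).starProjection v = magKerProj η v := by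
  have hN := sq_add_sq_add_sq_ne_zero hη
  refine Submodule.eq_starProjection_of_mem_of_inner_eq_zero ?_ fun w hw => ?_
  · rw [mem_ker_magSymbol6_iff]
    simp only [magKerProj, Matrix.cons_val_zero, Matrix.cons_val_one, Matrix.cons_val]
    refine ⟨?_, by ring, by ring, by ring⟩
    field_simp
    ring
  · obtain ⟨h₁, h₂, h₃, h₄⟩ := (mem_ker_magSymbol6_iff η w).mp hw
    simp only [magKerProj, PiLp.inner_apply, PiLp.sub_apply, RCLike.inner_apply,
      Real.ringHom_apply, Fin.sum_univ_six, Matrix.cons_val_zero, Matrix.cons_val_one,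
      Matrix.cons_val]
    field_simp
    -- `⟪v - P v, w⟫ = s η·(w_a + w_b) + (|η|² b·w_b - (η·b)(η·w_b)) / |η|²`, and by Lagrange's
    -- identity the last numerator is `(η × b)·(η × w_b) = 0`.
    linear_combination (η 0 * (v 0 + v 3) + η 1 * (v 1 + v 4) + η 2 * (v 2 + v 5)) * h₁ +
      2 * ((η 1 * v 5 - η 2 * v 4) * h₂ + (η 2 * v 3 - η 0 * v 5) * h₃ +
        (η 0 * v 4 - η 1 * v 3) * h₄)

lemma continuousAt_magKerProj {η : Fin 3 → ℝ} (hη : η ≠ 0) (v : EuclideanSpace ℝ (Fin 6)) :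
    ContinuousAt (magKerProj · v) η := by
  have hN : 2 * (η 0 ^ 2 + η 1 ^ 2 + η 2 ^ 2) ≠ 0 :=
    mul_ne_zero two_ne_zero (sq_add_sq_add_sq_ne_zero hη)
  unfold magKerProj
  fun_prop (disch := exact hN)

theorem magSymbol_projection_convergence_general (ξ : Fin 3 → ℝ) (hξ3 : ξ 2 ≠ 0)
    (v : EuclideanSpace ℝ (Fin 6)) :
    Tendsto (fun ε : ℝ =>
        (Submodule.orthogonalProjection (LinearMap.ker (magSymbol6 ![ξ 0, ξ 1, ξ 2 / ε])) v :
          EuclideanSpace ℝ (Fin 6)))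
      (nhdsWithin 0 (Set.Ioi (0 : ℝ)))
      (nhds (Submodule.orthogonalProjection magLimitSpace v : EuclideanSpace ℝ (Fin 6))) := by
  let η : ℝ → Fin 3 → ℝ := fun ε => ![ε * ξ 0, ε * ξ 1, ξ 2]
  have hη : ∀ ε, η ε ≠ 0 := fun ε h => hξ3 (by simpa [η] using congrFun h 2)
  have hker : ∀ ε > 0, LinearMap.ker (magSymbol6 ![ξ 0, ξ 1, ξ 2 / ε]) =
      LinearMap.ker (magSymbol6 (η ε)) := fun ε hε => by
    rw [← ker_magSymbol6_smul (inv_ne_zero hε.ne') (η ε)]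
    simp [η, Matrix.smul_cons, hε.ne', div_eq_inv_mul]
  have hlim : magLimitSpace = LinearMap.ker (magSymbol6 (η 0)) := by
    simpa [η] using (ker_magSymbol6_vertical hξ3).symm
  have hcont : ContinuousAt (fun ε => magKerProj (η ε) v) 0 :=
    (continuousAt_magKerProj (hη 0) v).comp (by fun_prop)
  simp only [← Submodule.starProjection_apply]
  rw [hlim, starProjection_ker_magSymbol6 (hη 0)]
  refine (hcont.tendsto.mono_left nhdsWithin_le_nhds).congr' ?_
  filter_upwards [self_mem_nhdsWithin] with ε hε
  rw [hker ε hε, starProjection_ker_magSymbol6 (hη ε)]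

/-- for fixed `ξ ∈ ℝ³ \ {0}` with `ξ₃ ≠ 0` and `ξ_ε = (ξ₁, ξ₂, ξ₃/ε)`, the
orthogonal projections onto `ker A(ξ_ε)` converge pointwise, as `ε → 0⁺`, to the orthogonal
projection onto `{(a,b) : a₃ + b₃ = 0, b₁ = b₂ = 0}`. -/
theorem magSymbol_projection_convergence (ξ : Fin 3 → ℝ) (hξ : ξ ≠ 0) (hξ3 : ξ 2 ≠ 0)
    (v : EuclideanSpace ℝ (Fin 6)) :
    Tendsto (fun ε : ℝ =>
        (Submodule.orthogonalProjection (LinearMap.ker (magSymbol6 ![ξ 0, ξ 1, ξ 2 / ε])) v :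
          EuclideanSpace ℝ (Fin 6)))
      (nhdsWithin 0 (Set.Ioi (0 : ℝ)))
      (nhds (Submodule.orthogonalProjection magLimitSpace v : EuclideanSpace ℝ (Fin 6))) :=
  magSymbol_projection_convergence_general ξ hξ3 v
end
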